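/- arXiv:2408.15534 — 4 statements merged into one kernel-verified Lean document; each statement's English description precedes it below -/
import Mathlib

section
/- Let k ≥ 2, τ > 0, and let ū1, ..., ūk ≥ 0 be real numbers. Then there exist symmetric real coefficients ηᵢⱼ = ηⱼᵢ (i ≠ j) such that the values ûᵢ = ūᵢ + τ Σ_{j≠i} ηᵢⱼ ūⱼ satisfy ûᵢ ≥ 0 for all i, ûᵢ ûⱼ = 0 for all i ≠ j, and ûᵢ = (ūᵢ² - max_{j≠i} ūⱼ²)/ūᵢ if ūᵢ > max_{j≠i} ūⱼ while ûᵢ = 0 otherwise. -/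
theorem stmt5 (k : ℕ) (hk : 2 ≤ k) (τ : ℝ) (hτ : 0 < τ)
    (ub : Fin k → ℝ) (hub : ∀ i, 0 ≤ ub i) :
    ∃ η : Fin k → Fin k → ℝ, (∀ i j, η i j = η j i) ∧
      ∀ uh : Fin k → ℝ,
        (∀ i, uh i = ub i + τ * ∑ j ∈ Finset.univ.erase i, η i j * ub j) →
        (∀ i, 0 ≤ uh i) ∧ (∀ i j, i ≠ j → uh i * uh j = 0) ∧
        (∀ i, uh i =
          if (⨆ j : {j : Fin k // j ≠ i}, ub j.1) < ub i then
            (ub i ^ 2 - ⨆ j : {j : Fin k // j ≠ i}, (ub j.1) ^ 2) / ub i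
          else 0) := by
  classical
  haveI : Nontrivial (Fin k) := Fin.nontrivial_iff_two_le.mpr hk
  have hτ0 : τ ≠ 0 := ne_of_gt hτ
  -- global argmax p
  obtain ⟨p, -, hp⟩ := Finset.exists_max_image (Finset.univ : Finset (Fin k)) ub
    Finset.univ_nonempty
  have hp' : ∀ j, ub j ≤ ub p := fun j => hp j (Finset.mem_univ _)
  -- argmax q of the rest
  obtain ⟨q, hqmem, hq⟩ := Finset.exists_max_image (Finset.univ.erase p) ub
    (by obtain ⟨j, hj⟩ := exists_ne p
        exact ⟨j, Finset.mem_erase.2 ⟨hj, Finset.mem_univ _⟩⟩)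
  have hqp : q ≠ p := (Finset.mem_erase.1 hqmem).1
  have hpq : p ≠ q := hqp.symm
  have hq' : ∀ j, j ≠ p → ub j ≤ ub q := fun j hj =>
    hq j (Finset.mem_erase.2 ⟨hj, Finset.mem_univ _⟩)
  have hqle : ub q ≤ ub p := hp' q
  -- sup facts
  have bdd : ∀ (i : Fin k) (f : {j : Fin k // j ≠ i} → ℝ), BddAbove (Set.range f) :=
    fun i f => (Set.finite_range f).bddAbove
  have hne : ∀ i : Fin k, Nonempty {j : Fin k // j ≠ i} := by
    intro i; obtain ⟨j, hj⟩ := exists_ne i; exact ⟨⟨j, hj⟩⟩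
  have hsup_ge : ∀ (i j : Fin k) (h : j ≠ i),
      ub j ≤ ⨆ j : {j : Fin k // j ≠ i}, ub j.1 :=
    fun i j h => le_ciSup (f := fun j : {j : Fin k // j ≠ i} => ub j.1) (bdd i _) ⟨j, h⟩
  have hsup_p : (⨆ j : {j : Fin k // j ≠ p}, ub j.1) = ub q := by
    haveI := hne p
    exact le_antisymm (ciSup_le fun j => hq' j.1 j.2) (hsup_ge p q hqp)
  have hsup_p2 : (⨆ j : {j : Fin k // j ≠ p}, (ub j.1) ^ 2) = (ub q) ^ 2 := by
    haveI := hne p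
    exact le_antisymm (ciSup_le fun j => pow_le_pow_left₀ (hub _) (hq' j.1 j.2) 2)
      (le_ciSup (f := fun j : {j : Fin k // j ≠ p} => (ub j.1) ^ 2) (bdd p _) ⟨q, hqp⟩)
  have hfalse : ∀ i, i ≠ p → ¬ ((⨆ j : {j : Fin k // j ≠ i}, ub j.1) < ub i) :=
    fun i hi => not_lt.2 ((hp' i).trans (hsup_ge i p (Ne.symm hi)))
  by_cases hq0 : ub q = 0
  · -- trivial case: everything except possibly p is zero already
    refine ⟨fun _ _ => 0, fun i j => rfl, ?_⟩
    intro uh huh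
    have huh' : ∀ i, uh i = ub i := by intro i; simp [huh i]
    have hz : ∀ i, i ≠ p → ub i = 0 := fun i hi => le_antisymm (hq0 ▸ hq' i hi) (hub i)
    refine ⟨fun i => (huh' i).symm ▸ hub i, ?_, ?_⟩
    · intro i j hij
      rcases eq_or_ne p i with rfl | hi
      · rw [huh' j, hz j (Ne.symm hij), mul_zero]
      · rw [huh' i, hz i hi.symm, zero_mul]
    · intro i
      rcases eq_or_ne p i with rfl | hi
      · rw [hsup_p, hsup_p2, hq0, huh' p]
        by_cases hpp : (0 : ℝ) < ub p
        · rw [if_pos hpp]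
          field_simp
          ring
        · rw [if_neg hpp]
          exact le_antisymm (not_lt.1 hpp) (hub p)
      · rw [if_neg (hfalse i hi.symm), huh' i, hz i hi.symm]
  · -- main case : ub q > 0
    have hqpos : 0 < ub q := lt_of_le_of_ne (hub q) (Ne.symm hq0)
    have hppos : 0 < ub p := lt_of_lt_of_le hqpos hqle
    have hp0 : ub p ≠ 0 := ne_of_gt hppos
    set T : Finset (Fin k) := (Finset.univ.erase p).erase q with hT
    set S : ℝ := ∑ j ∈ T, (ub j) ^ 2 with hS
    set A : ℝ := (S - 2 * (ub q) ^ 2) / (2 * τ * ub p * ub q) with hA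
    set c : Fin k → Fin k → ℝ := fun i j =>
      if i = p ∧ j = q then A
      else if (j = p ∨ j = q) ∧ ¬(i = p ∨ i = q) then -ub i / (2 * τ * ub j)
      else 0 with hc
    refine ⟨fun i j => c i j + c j i, fun i j => add_comm _ _, ?_⟩
    intro uh huh
    -- row values of c
    have cval_ip : ∀ i, i ≠ p → i ≠ q → c i p + c p i = -ub i / (2 * τ * ub p) := by
      intro i hip hiq
      simp [hc, hip, hiq, hpq]
    have cval_iq : ∀ i, i ≠ p → i ≠ q → c i q + c q i = -ub i / (2 * τ * ub q) := by
      intro i hip hiq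
      simp [hc, hip, hiq, hqp]
    have cval_pq : c p q + c q p = A := by simp [hc, hqp]
    have cval_out : ∀ i j, i ≠ p → i ≠ q → j ≠ p → j ≠ q → c i j + c j i = 0 := by
      intro i j hip hiq hjp hjq
      simp [hc, hip, hiq, hjp, hjq]
    -- value of uh at i ∉ {p, q}
    have huh_out : ∀ i, i ≠ p → i ≠ q → uh i = 0 := by
      intro i hip hiq
      have hsub : ({p, q} : Finset (Fin k)) ⊆ Finset.univ.erase i := by
        intro x hx
        rcases Finset.mem_insert.1 hx with rfl | hx
        · exact Finset.mem_erase.2 ⟨Ne.symm hip, Finset.mem_univ _⟩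
        · rw [Finset.mem_singleton] at hx
          subst hx
          exact Finset.mem_erase.2 ⟨Ne.symm hiq, Finset.mem_univ _⟩
      have hzero : ∀ x ∈ Finset.univ.erase i, x ∉ ({p, q} : Finset (Fin k)) →
          (c i x + c x i) * ub x = 0 := by
        intro x _ hx
        rw [Finset.mem_insert, Finset.mem_singleton] at hx
        push_neg at hx
        rw [cval_out i x hip hiq hx.1 hx.2, zero_mul]
      have := Finset.sum_subset hsub hzero
      rw [huh i, ← this, Finset.sum_pair hpq, cval_ip i hip hiq, cval_iq i hip hiq]
      field_simp
      ring
    -- value of uh at q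
    have hrowq : ∑ j ∈ Finset.univ.erase q, (c q j + c j q) * ub j
        = A * ub p + S * (-(1 / (2 * τ * ub q))) := by
      have hpmem : p ∈ Finset.univ.erase q := Finset.mem_erase.2 ⟨hpq, Finset.mem_univ _⟩
      rw [← Finset.insert_erase hpmem, Finset.sum_insert (Finset.notMem_erase _ _)]
      have hTq : (Finset.univ.erase q).erase p = T := Finset.erase_right_comm
      rw [hTq, add_comm (c q p) (c p q), cval_pq]
      congr 1
      rw [hS, Finset.sum_mul]
      refine Finset.sum_congr rfl ?_
      intro j hj
      have hjq : j ≠ q := (Finset.mem_erase.1 hj).1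
      have hjp : j ≠ p := (Finset.mem_erase.1 (Finset.mem_erase.1 hj).2).1
      rw [add_comm (c q j) (c j q), cval_iq j hjp hjq]
      field_simp
    have huh_q : uh q = 0 := by
      rw [huh q, hrowq, hA]
      field_simp
      ring
    -- value of uh at p
    have hrowp : ∑ j ∈ Finset.univ.erase p, (c p j + c j p) * ub j
        = A * ub q + S * (-(1 / (2 * τ * ub p))) := by
      have hqmem' : q ∈ Finset.univ.erase p := hqmem
      rw [← Finset.insert_erase hqmem', Finset.sum_insert (Finset.notMem_erase _ _)]
      rw [cval_pq]
      congr 1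
      rw [hS, Finset.sum_mul]
      refine Finset.sum_congr rfl ?_
      intro j hj
      have hjq : j ≠ q := (Finset.mem_erase.1 hj).1
      have hjp : j ≠ p := (Finset.mem_erase.1 (Finset.mem_erase.1 hj).2).1
      rw [add_comm (c p j) (c j p), cval_ip j hjp hjq]
      field_simp
    have huh_p : uh p = ub p - (ub q) ^ 2 / ub p := by
      rw [huh p, hrowp, hA]
      field_simp
      ring
    -- conclude
    have huh_ne : ∀ i, i ≠ p → uh i = 0 := by
      intro i hip
      rcases eq_or_ne i q with rfl | hiq
      · exact huh_q
      · exact huh_out i hip hiq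
    have huh_p_nonneg : 0 ≤ uh p := by
      rw [huh_p, sub_nonneg, div_le_iff₀ hppos]
      nlinarith [hqle, hub q]
    refine ⟨?_, ?_, ?_⟩
    · intro i
      rcases eq_or_ne p i with rfl | hi
      · exact huh_p_nonneg
      · rw [huh_ne i hi.symm]
    · intro i j hij
      rcases eq_or_ne p i with rfl | hi
      · rw [huh_ne j (Ne.symm hij), mul_zero]
      · rw [huh_ne i hi.symm, zero_mul]
    · intro i
      rcases eq_or_ne p i with rfl | hi
      · rw [hsup_p, hsup_p2, huh_p]
        by_cases hlt : ub q < ub p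
        · rw [if_pos hlt]
          field_simp
        · rw [if_neg hlt]
          have : ub q = ub p := le_antisymm hqle (not_lt.1 hlt)
          rw [this]
          field_simp
          ring
      · rw [if_neg (hfalse i hi.symm), huh_ne i hi.symm]
end

section
/- Let k = 3, τ > 0, and let ū_m ≥ ū_p ≥ ū_q > 0 be positive reals (with {m,p,q} = {1,2,3}). Define η_{mq} = η_{qm} = -ū_q/(2τ ū_m), η_{pq} = η_{qp} = -ū_q/(2τ ū_p), η_{mp} = η_{pm} = -(2ū_p² - ū_q²)/(2τ ū_m ū_p). Then with ûᵢ = ūᵢ + τ Σ_{j≠i} η_{ij} ūⱼ, one has û_p = û_q = 0 and û_m = (ū_m² - ū_p²)/ū_m ≥ 0. -/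
theorem stmt6 (τ um upp uq : ℝ) (hτ : 0 < τ)
    (hq : 0 < uq) (hpq : uq ≤ upp) (hmp : upp ≤ um) :
    let ηmq := -uq / (2 * τ * um)
    let ηpq := -uq / (2 * τ * upp)
    let ηmp := -(2 * upp ^ 2 - uq ^ 2) / (2 * τ * um * upp)
    let vm := um + τ * (ηmp * upp + ηmq * uq)
    let vp := upp + τ * (ηmp * um + ηpq * uq)
    let vq := uq + τ * (ηmq * um + ηpq * upp)
    vp = 0 ∧ vq = 0 ∧ vm = (um ^ 2 - upp ^ 2) / um ∧ 0 ≤ vm := by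
  intro ηmq ηpq ηmp vm vp vq
  have hp : 0 < upp := lt_of_lt_of_le hq hpq
  have hm : 0 < um := lt_of_lt_of_le hp hmp
  have hτ' := hτ.ne'
  have hp' := hp.ne'
  have hm' := hm.ne'
  have hvm : vm = (um ^ 2 - upp ^ 2) / um := by
    simp only [vm, ηmp, ηmq]
    field_simp
    ring
  refine ⟨?_, ?_, hvm, ?_⟩
  · simp only [vp, ηmp, ηpq]; field_simp; ring
  · simp only [vq, ηmq, ηpq]; field_simp; ring
  · rw [hvm]
    apply div_nonneg _ hm.le
    nlinarith
end

section
/- Let k ≥ 2, τ > 0, and ũ1, ..., ũk be real numbers. Then there exist reals λᵢ ≥ 0 and symmetric ηᵢⱼ = ηⱼᵢ (i ≠ j) such that ûᵢ := ũᵢ + τλᵢ + τ Σ_{j≠i} ηᵢⱼ ũⱼ satisfies: λᵢ ûᵢ = 0, ûᵢ ≥ 0, ûᵢ ûⱼ = 0 for i ≠ j, and moreover ûᵢ = ũᵢ - max_{j≠i} ũⱼ whenever ũᵢ > 0 and ũᵢ > max_{j≠i} ũⱼ, with ûᵢ = 0 otherwise. -/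
lemma stmt7ifsym {α : Type*} [DecidableEq α] (p q : α) (e' : ℝ) (c' : α → ℝ) (i j : α) :
    (if i = p ∧ j = q then e' else if i = q ∧ j = p then e' else
      if j = q ∧ i ≠ p then c' i else if i = q ∧ j ≠ p then c' j else 0)
  = (if j = p ∧ i = q then e' else if j = q ∧ i = p then e' else
      if i = q ∧ j ≠ p then c' j else if j = q ∧ i ≠ p then c' i else 0) := by
  by_cases hip : i = p <;> by_cases hiq : i = q <;> by_cases hjp : j = p <;> by_cases hjq : j = q <;>
    subst_vars <;> simp_all

lemma stmt7aux (k : ℕ) (τ : ℝ) (hτ : 0 < τ) (ut : Fin k → ℝ) (p q : Fin k)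
    (hqp : q ≠ p) (hp : ∀ j, ut j ≤ ut p) (hq : ∀ j, j ≠ p → ut j ≤ ut q) :
    ∃ (lam : Fin k → ℝ) (η : Fin k → Fin k → ℝ),
      (∀ i, 0 ≤ lam i) ∧ lam p = 0 ∧ (∀ i j, η i j = η j i) ∧
      ∀ i, ut i + τ * lam i + τ * ∑ j ∈ Finset.univ.erase i, η i j * ut j =
        (if i = p ∧ 0 < ut p ∧ ut q < ut p then ut p - ut q else 0) := by
  classical
  have hτ0 : (τ : ℝ) ≠ 0 := ne_of_gt hτ
  have hpq : p ≠ q := Ne.symm hqp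
  have hqle : ut q ≤ ut p := hp q
  set Dp : ℝ := if 0 < ut p ∧ ut q < ut p then ut p - ut q else 0 with hDp
  set c : Fin k → ℝ := fun i => if 0 < ut i then -ut i / (τ * ut q) else 0 with hc
  set e : ℝ := if ut q = 0 then 0 else (Dp - ut p) / (τ * ut q) with he
  set Sq : ℝ := e * ut p + ∑ j ∈ (Finset.univ.erase q).erase p, c j * ut j with hSq
  set lam : Fin k → ℝ := fun i =>
    if i = p then 0 else if i = q then (-ut q / τ - Sq) else
      if 0 < ut i then 0 else -ut i / τ with hlam
  set η : Fin k → Fin k → ℝ := fun i j =>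
    if i = p ∧ j = q then e else if i = q ∧ j = p then e else
      if j = q ∧ i ≠ p then c i else if i = q ∧ j ≠ p then c j else 0 with hη
  -- row p relation
  have hrowp : ut p + τ * (e * ut q) = Dp := by
    by_cases hq0 : ut q = 0
    · simp only [he, if_pos hq0, hq0]
      by_cases hcond : 0 < ut p ∧ ut q < ut p
      · rw [hDp, if_pos hcond, hq0]; ring
      · rw [hDp, if_neg hcond]
        have h1 : ¬ 0 < ut p := by
          intro h; exact hcond ⟨h, by rw [hq0]; exact h⟩
        have h2 : ut p = 0 := le_antisymm (not_lt.mp h1) (hq0 ▸ hqle)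
        rw [h2]; ring
    · rw [he, if_neg hq0]; field_simp; ring
  -- c relation (positive case)
  have hrowc : ∀ j, j ≠ p → 0 < ut j → ut j + τ * (c j * ut q) = 0 := by
    intro j hjp hj
    have hq0 : ut q ≠ 0 := ne_of_gt (lt_of_lt_of_le hj (hq j hjp))
    rw [hc]; simp only [if_pos hj]; field_simp; ring
  -- nonpositivity of c j * ut j for j ≠ p
  have hcnp : ∀ j, j ≠ p → c j * ut j ≤ 0 := by
    intro j hjp
    by_cases hj : 0 < ut j
    · have hq0 : 0 < ut q := lt_of_lt_of_le hj (hq j hjp)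
      rw [hc]; simp only [if_pos hj]
      rw [div_mul_eq_mul_div, neg_mul]
      apply div_nonpos_of_nonpos_of_nonneg
      · nlinarith
      · positivity
    · rw [hc]; simp only [if_neg hj, zero_mul]; exact le_refl 0
  -- lam q nonneg
  have hlamq : 0 ≤ -ut q / τ - Sq := by
    have hT : ∑ j ∈ (Finset.univ.erase q).erase p, c j * ut j ≤ 0 := by
      apply Finset.sum_nonpos
      intro j hj
      exact hcnp j (Finset.mem_erase.mp hj).1
    have hmain : 0 ≤ -ut q / τ - e * ut p := by
      by_cases hq0 : ut q = 0
      · simp [he, hq0]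
      · have hee : e * (τ * ut q) = Dp - ut p := by
          rw [he, if_neg hq0]; field_simp
        have key : 0 ≤ -ut q - τ * (e * ut p) := by
          by_cases hcond : 0 < ut p ∧ ut q < ut p
          · have hDp' : Dp = ut p - ut q := by rw [hDp, if_pos hcond]
            rw [hDp'] at hee
            have heτ : e * τ = -1 := by
              have h := mul_right_cancel₀ hq0
                (by linear_combination hee : (e * τ) * ut q = (-1) * ut q)
              exact h
            have h2 : τ * (e * ut p) = -ut p := by linear_combination ut p * heτ
            linarith [hqle]
          · have hDp' : Dp = 0 := by rw [hDp, if_neg hcond]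
            rw [hDp'] at hee
            rcases lt_or_gt_of_ne hq0 with hneg | hpos
            · have hple : ut p ≤ 0 := by
                by_contra h
                push_neg at h
                exact hcond ⟨h, lt_trans hneg h⟩
              have h1 : (-ut q) * (-ut q - τ * (e * ut p)) = ut q ^ 2 - ut p ^ 2 := by
                linear_combination ut p * hee
              nlinarith [h1, mul_nonneg (sub_nonneg.mpr hqle)
                (by linarith : (0:ℝ) ≤ -ut p - ut q), hneg]
            · have hpp : 0 < ut p := lt_of_lt_of_le hpos hqle
              have hple : ut p ≤ ut q := by
                by_contra h
                push_neg at h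
                exact hcond ⟨hpp, h⟩
              have hpeq : ut p = ut q := le_antisymm hple hqle
              have heτ : e * τ = -1 := by
                have h := mul_right_cancel₀ hq0
                  (by linear_combination hee - hpeq : (e * τ) * ut q = (-1) * ut q)
                exact h
              have h2 : τ * (e * ut p) = -ut p := by linear_combination ut p * heτ
              linarith [hqle]
        have hrw : -ut q / τ - e * ut p = (-ut q - τ * (e * ut p)) / τ := by
          field_simp
        rw [hrw]
        exact div_nonneg key (le_of_lt hτ)
    rw [hSq]; linarith
  refine ⟨lam, η, ?_, ?_, ?_, ?_⟩
  · -- lam nonneg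
    intro i
    rw [hlam]
    by_cases hip : i = p
    · simp [hip]
    · by_cases hiq : i = q
      · simp only [if_neg hip, hiq, if_neg hpq.symm, if_pos rfl]
        rw [hiq] at hip
        exact hlamq
      · simp only [if_neg hip, if_neg hiq]
        by_cases hi : 0 < ut i
        · simp [hi]
        · simp only [if_neg hi]
          apply div_nonneg _ (le_of_lt hτ)
          linarith [not_lt.mp hi]
  · rw [hlam]; simp
  · -- symmetry
    intro i j
    simp only [hη]
    exact stmt7ifsym p q e c i j
  · -- the key identity
    intro i
    by_cases hip : i = p
    · subst hip
      have hsum : ∑ j ∈ Finset.univ.erase i, η i j * ut j = e * ut q := by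
        have step : ∀ j ∈ Finset.univ.erase i, η i j * ut j
            = if j = q then e * ut q else 0 := by
          intro j hj
          have hjp : j ≠ i := (Finset.mem_erase.mp hj).1
          by_cases hjq : j = q
          · subst hjq; simp only [hη]; simp
          · simp only [hη]; simp [hjq, hpq, hjp]
        rw [Finset.sum_congr rfl step, Finset.sum_ite_eq']
        rw [if_pos (Finset.mem_erase.mpr ⟨hqp, Finset.mem_univ q⟩)]
      rw [hsum]
      have hl : lam i = 0 := by rw [hlam]; simp
      rw [hl]
      have hcongr : (i = i ∧ 0 < ut i ∧ ut q < ut i) ↔ (0 < ut i ∧ ut q < ut i) := by simp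
      rw [if_congr hcongr rfl rfl, ← hDp]
      linarith [hrowp]
    · by_cases hiq : i = q
      · subst hiq
        have hsum : ∑ j ∈ Finset.univ.erase i, η i j * ut j = Sq := by
          have step : ∀ j ∈ Finset.univ.erase i, η i j * ut j
              = (if j = p then e else c j) * ut j := by
            intro j hj
            have hji : j ≠ i := (Finset.mem_erase.mp hj).1
            by_cases hjp : j = p
            · subst hjp; simp only [hη]; simp [hip]
            · simp only [hη]; simp [hjp, hip, hji]
          rw [Finset.sum_congr rfl step]
          rw [← Finset.add_sum_erase _ _ (Finset.mem_erase.mpr ⟨Ne.symm hip, Finset.mem_univ p⟩)]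
          rw [hSq, if_pos rfl]
          congr 1
          apply Finset.sum_congr rfl
          intro j hj
          rw [if_neg (Finset.mem_erase.mp hj).1]
        rw [hsum]
        have hl : lam i = -ut i / τ - Sq := by rw [hlam]; simp [hip]
        rw [hl, if_neg (by simp [hip] : ¬(i = p ∧ 0 < ut p ∧ ut i < ut p))]
        field_simp
        ring
      · have hsum : ∑ j ∈ Finset.univ.erase i, η i j * ut j = c i * ut q := by
          have step : ∀ j ∈ Finset.univ.erase i, η i j * ut j
              = if j = q then c i * ut q else 0 := by
            intro j hj
            by_cases hjq : j = q
            · subst hjq; simp only [hη]; simp [hip, hiq]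
            · simp only [hη]; simp [hip, hiq, hjq]
          rw [Finset.sum_congr rfl step, Finset.sum_ite_eq']
          rw [if_pos (Finset.mem_erase.mpr ⟨Ne.symm hiq, Finset.mem_univ q⟩)]
        rw [hsum]
        have hl : lam i = if 0 < ut i then 0 else -ut i / τ := by
          rw [hlam]; simp [hip, hiq]
        by_cases hi : 0 < ut i
        · rw [hl, if_pos hi, if_neg (by simp [hip] : ¬(i = p ∧ 0 < ut p ∧ ut q < ut p))]
          linarith [hrowc i hip hi]
        · rw [hl, if_neg hi, if_neg (by simp [hip] : ¬(i = p ∧ 0 < ut p ∧ ut q < ut p))]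
          have hci : c i = 0 := by rw [hc]; simp [hi]
          rw [hci]
          field_simp
          ring

theorem stmt7 (k : ℕ) (hk : 2 ≤ k) (τ : ℝ) (hτ : 0 < τ)
    (ut : Fin k → ℝ) :
    ∃ (lam : Fin k → ℝ) (η : Fin k → Fin k → ℝ),
      (∀ i, 0 ≤ lam i) ∧ (∀ i j, η i j = η j i) ∧
      ∀ uh : Fin k → ℝ,
        (∀ i, uh i = ut i + τ * lam i + τ * ∑ j ∈ Finset.univ.erase i, η i j * ut j) →
        (∀ i, lam i * uh i = 0) ∧ (∀ i, 0 ≤ uh i) ∧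
        (∀ i j, i ≠ j → uh i * uh j = 0) ∧
        (∀ i, uh i =
          if 0 < ut i ∧ (⨆ j : {j : Fin k // j ≠ i}, ut j.1) < ut i then
            ut i - ⨆ j : {j : Fin k // j ≠ i}, ut j.1
          else 0) := by
  classical
  have h0k : 0 < k := by omega
  haveI : Nontrivial (Fin k) :=
    ⟨⟨0, h0k⟩, ⟨1, by omega⟩, by simp [Fin.ext_iff]⟩
  obtain ⟨p, -, hpmax⟩ := Finset.exists_max_image (Finset.univ : Finset (Fin k)) ut
    ⟨⟨0, h0k⟩, Finset.mem_univ _⟩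
  have hp' : ∀ j, ut j ≤ ut p := fun j => hpmax j (Finset.mem_univ j)
  obtain ⟨q, hqmem, hqmax⟩ := Finset.exists_max_image (Finset.univ.erase p) ut (by
    obtain ⟨x, hx⟩ := exists_ne p
    exact ⟨x, Finset.mem_erase.mpr ⟨hx, Finset.mem_univ _⟩⟩)
  have hqp : q ≠ p := (Finset.mem_erase.mp hqmem).1
  have hq' : ∀ j, j ≠ p → ut j ≤ ut q := fun j hj =>
    hqmax j (Finset.mem_erase.mpr ⟨hj, Finset.mem_univ _⟩)
  have hne : ∀ i : Fin k, Nonempty {j : Fin k // j ≠ i} := fun i =>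
    (exists_ne i).elim fun x hx => ⟨⟨x, hx⟩⟩
  have hbdd : ∀ i : Fin k, BddAbove (Set.range fun j : {j : Fin k // j ≠ i} => ut j.1) :=
    fun i => Set.Finite.bddAbove (Set.finite_range _)
  have hMp : (⨆ j : {j : Fin k // j ≠ p}, ut j.1) = ut q := by
    haveI := hne p
    exact le_antisymm (ciSup_le fun j => hq' j.1 j.2) (le_ciSup (hbdd p) ⟨q, hqp⟩)
  have hMi : ∀ i, i ≠ p → (⨆ j : {j : Fin k // j ≠ i}, ut j.1) = ut p := by
    intro i hi
    haveI := hne i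
    exact le_antisymm (ciSup_le fun j => hp' j.1) (le_ciSup (hbdd i) ⟨p, Ne.symm hi⟩)
  obtain ⟨lam, η, hlamnn, hlamp, hsym, hkey⟩ := stmt7aux k τ hτ ut p q hqp hp' hq'
  refine ⟨lam, η, hlamnn, hsym, ?_⟩
  intro uh huh
  have huh' : ∀ i, uh i = if i = p ∧ 0 < ut p ∧ ut q < ut p then ut p - ut q else 0 := by
    intro i; rw [huh i]; exact hkey i
  refine ⟨?_, ?_, ?_, ?_⟩
  · intro i
    by_cases hipp : i = p
    · rw [hipp, hlamp]; ring
    · rw [huh' i, if_neg (by simp [hipp])]; ring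
  · intro i
    rw [huh' i]
    split_ifs with h
    · linarith [h.2.2]
    · exact le_refl 0
  · intro i j hij
    by_cases hipp : i = p
    · have hjp : j ≠ p := fun h => hij (by rw [hipp, h])
      rw [huh' j, if_neg (by simp [hjp]), mul_zero]
    · rw [huh' i, if_neg (by simp [hipp]), zero_mul]
  · intro i
    rw [huh' i]
    by_cases hipp : i = p
    · rw [hipp, hMp]
      simp
    · rw [hMi i hipp, if_neg (by simp [hipp]),
        if_neg (fun h => absurd h.2 (not_lt.mpr (hp' i)))]
end

section
/- Suppose the iterates u₁ⁿ⁺¹, ..., u_kⁿ⁺¹ and the Lagrange multiplier σⁿ⁺¹ satisfy the energy dissipating step: uᵢⁿ⁺¹ = (ûᵢⁿ⁺¹ + Ψ[ûᵢⁿ⁺¹, σⁿ⁺¹]σⁿ⁺¹)/‖ûᵢⁿ⁺¹ + Ψ[ûᵢⁿ⁺¹, σⁿ⁺¹]σⁿ⁺¹‖, where Ψ[u,σ](x) = 1 if u(x) > 0 and u(x) + σ > 0, Ψ = 0 otherwise, and ûᵢⁿ⁺¹ ≥ 0 pointwise with ûᵢⁿ⁺¹ûⱼⁿ⁺¹ =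 0 pointwise for i ≠ j (and each ûᵢⁿ⁺¹ ≠ 0). Then uᵢⁿ⁺¹ ≥ 0 pointwise, ‖uᵢⁿ⁺¹‖ = 1, and uᵢⁿ⁺¹uⱼⁿ⁺¹ = 0 pointwise for i ≠ j. -/
open MeasureTheory

noncomputable def Psi (u : ℝ) (σ : ℝ) : ℝ :=
  if 0 < u ∧ 0 < u + σ then 1 else 0

theorem stmt19 {Ω : Type*} [MeasurableSpace Ω] (μ : Measure Ω) [IsFiniteMeasure μ]
    (k : ℕ) (σ : ℝ)
    (uh : Fin k → Ω → ℝ)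
    (hmeas : ∀ i, Measurable (uh i))
    (hmem : ∀ i, MemLp (uh i) 2 μ)
    (hnonzero : ∀ i, 0 < ∫ x, (uh i x) ^ 2 ∂μ)
    (hpos : ∀ i x, 0 ≤ uh i x)
    (horth : ∀ i j, i ≠ j → ∀ x, uh i x * uh j x = 0)
    (u : Fin k → Ω → ℝ)
    (hu : ∀ i x, u i x =
      (uh i x + Psi (uh i x) σ * σ) /
        Real.sqrt (∫ y, (uh i y + Psi (uh i y) σ * σ) ^ 2 ∂μ)) :
    (∀ i x, 0 ≤ u i x) ∧ (∀ i, ∫ x, (u i x) ^ 2 ∂μ = 1) ∧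
    (∀ i j, i ≠ j → ∀ x, u i x * u j x = 0) := by
  set v : Fin k → Ω → ℝ := fun i x => uh i x + Psi (uh i x) σ * σ with hv
  have hvnn : ∀ i x, 0 ≤ v i x := by
    intro i x
    simp only [hv, Psi]
    split_ifs with h
    · linarith [h.2]
    · simpa using hpos i x
  have hvzero : ∀ i x, uh i x = 0 → v i x = 0 := by
    intro i x h
    simp [hv, Psi, h]
  have hvne : ∀ i x, uh i x ≠ 0 → v i x ≠ 0 := by
    intro i x h
    have hx : 0 < uh i x := lt_of_le_of_ne (hpos i x) (Ne.symm h)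
    simp only [hv, Psi]
    split_ifs with hc
    · simp only [one_mul]; exact ne_of_gt (by linarith [hc.2])
    · simp only [zero_mul, add_zero]; exact hx.ne'
  have hvmeas : ∀ i, Measurable (v i) := by
    intro i
    apply (hmeas i).add
    have hm : Measurable (fun x => Psi (uh i x) σ) := by
      unfold Psi
      refine Measurable.ite ?_ measurable_const measurable_const
      exact ((measurableSet_lt measurable_const (hmeas i)).inter
        (measurableSet_lt measurable_const ((hmeas i).add_const σ)))
    exact hm.mul_const σ
  have hvmem : ∀ i, MemLp (v i) 2 μ := by
    intro i
    refine (hmem i).add ?_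
    refine MemLp.of_bound (((hvmeas i).sub (hmeas i)).aestronglyMeasurable.congr ?_) |σ| ?_
    · exact Filter.EventuallyEq.of_eq (by funext x; simp [hv])
    · refine Filter.Eventually.of_forall fun x => ?_
      simp only [Psi, norm_mul]
      split_ifs <;> simp
  have hvint : ∀ i, Integrable (fun x => v i x ^ 2) μ := fun i => (hvmem i).integrable_sq
  have hN : ∀ i, 0 < ∫ x, v i x ^ 2 ∂μ := by
    intro i
    rw [integral_pos_iff_support_of_nonneg (fun x => sq_nonneg _) (hvint i)]
    have h1 := (integral_pos_iff_support_of_nonneg (f := fun x => uh i x ^ 2)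
      (fun x => sq_nonneg _) (hmem i).integrable_sq).mp (hnonzero i)
    refine h1.trans_le (measure_mono ?_)
    intro x hx
    simp only [Function.mem_support] at hx ⊢
    have h2 : uh i x ≠ 0 := fun h => hx (by simp [h])
    exact pow_ne_zero _ (hvne i x h2)
  refine ⟨?_, ?_, ?_⟩
  · intro i x
    rw [hu i x]
    exact div_nonneg (hvnn i x) (Real.sqrt_nonneg _)
  · intro i
    have hNi := hN i
    have hsq : Real.sqrt (∫ y, v i y ^ 2 ∂μ) ^ 2 = ∫ y, v i y ^ 2 ∂μ :=
      Real.sq_sqrt hNi.le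
    calc ∫ x, u i x ^ 2 ∂μ
        = ∫ x, v i x ^ 2 / (∫ y, v i y ^ 2 ∂μ) ∂μ := by
          refine integral_congr_ae (Filter.Eventually.of_forall fun x => ?_)
          simp only
          rw [hu i x]
          show (v i x / Real.sqrt (∫ y, v i y ^ 2 ∂μ)) ^ 2 = _
          rw [div_pow, hsq]
      _ = (∫ x, v i x ^ 2 ∂μ) / (∫ y, v i y ^ 2 ∂μ) := integral_div _ _
      _ = 1 := div_self hNi.ne'
  · intro i j hij x
    rw [hu i x, hu j x]
    have h0 : uh i x * uh j x = 0 := horth i j hij x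
    rcases mul_eq_zero.mp h0 with h | h
    · have hz : uh i x + Psi (uh i x) σ * σ = 0 := hvzero i x h
      rw [hz]; simp
    · have hz : uh j x + Psi (uh j x) σ * σ = 0 := hvzero j x h
      rw [hz]; simp
end
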